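/- The program P4 consisting of the fact q(a) and the rule 'p(a) :- p ⊆ {X : q(X)}' has no Alog answer set. In particular neither {q(a)} nor {q(a), p(a)} is an answer set. -/
import Mathlib

/-- Atoms of program P4: `p` stands for `p(a)` and `q` for `q(a)`. -/
inductive AtomP4 : Type
  | p : AtomP4
  | q : AtomP4
deriving DecidableEq

/-- `B` satisfies the Alog set reduct of P4 = { q(a).  p(a) :- p ⊆ {X:q(X)} }
w.r.t. candidate set `A`.  The subset atom is true in `A` iff
`{t | p(t) ∈ A} ⊆ {t | q(t) ∈ A}` (here: `p ∈ A → q ∈ A`); in that case it is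
replaced by the union of all witnessing literals in `A`, which is `A` itself. -/
def SatisfiesReductP4 (A B : Set AtomP4) : Prop :=
  AtomP4.q ∈ B ∧
  ((AtomP4.p ∈ A → AtomP4.q ∈ A) → (A ⊆ B → AtomP4.p ∈ B))

/-- `A` is an Alog answer set of P4: a minimal model of the set reduct of P4 w.r.t. `A`. -/
def IsAnswerSetP4 (A : Set AtomP4) : Prop :=
  SatisfiesReductP4 A A ∧ ∀ B ⊂ A, ¬ SatisfiesReductP4 A B

theorem no_as (A : Set AtomP4) : ¬ IsAnswerSetP4 A := by
  rintro ⟨⟨hq, himp⟩, hmin⟩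
  have hp : AtomP4.p ∈ A := himp (fun _ => hq) (subset_refl A)
  apply hmin {AtomP4.q}
  · constructor
    · intro x hx; cases hx; exact hq
    · intro h; apply absurd (h hp); simp
  · exact ⟨rfl, fun _ hAB => absurd (hAB hp) (by simp)⟩

/-- P4 has no Alog answer set; in particular neither `{q(a)}` nor `{q(a), p(a)}`
is an answer set. -/
theorem P4_has_no_answer_set :
    (∀ A : Set AtomP4, ¬ IsAnswerSetP4 A) ∧
    ¬ IsAnswerSetP4 {AtomP4.q} ∧ ¬ IsAnswerSetP4 {AtomP4.q, AtomP4.p} := by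
  exact ⟨no_as, no_as _, no_as _⟩
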